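/- Let (H₁, D₁), (H₂, D₂) be finite-dimensional inner product spaces with positive semidefinite symmetric forms, eigenvalue lists λⱼ(Dᵢ), linear maps Q₁ : H₁ → H₂, Q₂ : H₂ → H₁, l ≤ min{dim H₁, dim H₂}, and E₁, E₂ defined as the Rayleigh quotient defects on the spans of the first l eigenvectors (as in the two-sided eigenvalue comparison lemma). Fix a > 0 and let P : H₂ → H₂ be the orthogonal projection onto the span of eigenvectors of D₂ with eigenvalues in [0, λ_l(D₁) + a]. Then for any f in the span of the first l eigenvectors of D₁: ‖(1−P) Q₁ f‖₂² ≤ (l/a)((E₁)₊ + E₂)‖Q₁ f‖₂², and D₂((1−P)Q₁f, (1−P)Q₁f) ≤ ((λ_l(D₁)+a)/a) · l · ((E₁)₊ + E₂) · ‖Q₁f‖₂², where (E₁)₊ := max{E₁, 0}. -/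

import Mathlib

/-!
Let `F` be the span of the first `l` eigenvectors of `D₁`, `L = Q₁ F`, and `tᵢ = ‖P_L uᵢ‖²`.
These weights lie in `[0, 1]`, sum to `dim L = l`, and the `D₂`-trace of `L` is `∑ λᵢ(D₂) tᵢ`.
Computing that trace in the orthonormal basis of `L` given by the singular vectors of `Q₁` on `F`,
the defect `E₂` gives `tr_L D₂ ≤ ∑_{k<l} λ_k(D₁) + l E₂`. On the other hand the min-max comparison
`λ_k(D₁) ≤ λ_k(D₂) + E₁` and a bathtub argument bound the trace of the truncated form
`D̃₂`, `∑ min(λᵢ(D₂), λ_l(D₁)) tᵢ`, from below by `∑_{k<l} λ_k(D₁) - l (E₁)₊`. Hence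
`∑ (λᵢ(D₂) - λ_l(D₁))₊ tᵢ ≤ l ((E₁)₊ + E₂)`, and as `⟨uᵢ, w⟩² ≤ tᵢ ‖w‖²` for `w ∈ L`, this controls
the components of `w = Q₁ g` along eigenvalues above `λ_l(D₁) + a`, in norm and in `D₂`.
-/

open Finset Submodule
open scoped RealInnerProductSpace

section Spectral

variable {H ι : Type*} [NormedAddCommGroup H] [InnerProductSpace ℝ H] [Fintype ι]
  (u : OrthonormalBasis ι ℝ H) {D : H →ₗ[ℝ] H →ₗ[ℝ] ℝ} {lam : ι → ℝ} {c a : ℝ} {P : H → H}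

theorem OrthonormalBasis.norm_sq_eq_sum_inner_sq (v : H) : ‖v‖ ^ 2 = ∑ i, ⟪u i, v⟫ ^ 2 := by
  simp_rw [← u.sum_sq_norm_inner_right v, Real.norm_eq_abs, sq_abs]

theorem apply_self_eq_sum_mul_inner_sq (heig : ∀ i v, D (u i) v = lam i * ⟪u i, v⟫) (v : H) :
    D v v = ∑ i, lam i * ⟪u i, v⟫ ^ 2 := by
  calc D v v = D (∑ i, ⟪u i, v⟫ • u i) v := by rw [u.sum_repr']
    _ = ∑ i, lam i * ⟪u i, v⟫ ^ 2 := by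
      simp only [map_sum, map_smul, LinearMap.sum_apply, LinearMap.smul_apply, smul_eq_mul, heig]
      exact Finset.sum_congr rfl fun i _ => by ring

theorem apply_self_le_mul_norm_sq (heig : ∀ i v, D (u i) v = lam i * ⟪u i, v⟫) {v : H}
    (hv : ∀ i, c < lam i → ⟪u i, v⟫ = 0) : D v v ≤ c * ‖v‖ ^ 2 := by
  rw [apply_self_eq_sum_mul_inner_sq u heig, u.norm_sq_eq_sum_inner_sq, Finset.mul_sum]
  refine Finset.sum_le_sum fun i _ => ?_
  rcases le_or_gt (lam i) c with h | h
  · exact mul_le_mul_of_nonneg_right h (sq_nonneg _)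
  · simp [hv i h]

theorem mul_norm_sq_le_apply_self (heig : ∀ i v, D (u i) v = lam i * ⟪u i, v⟫) {v : H}
    (hv : ∀ i, lam i < c → ⟪u i, v⟫ = 0) : c * ‖v‖ ^ 2 ≤ D v v := by
  rw [apply_self_eq_sum_mul_inner_sq u heig, u.norm_sq_eq_sum_inner_sq, Finset.mul_sum]
  refine Finset.sum_le_sum fun i _ => ?_
  rcases le_or_gt c (lam i) with h | h
  · exact mul_le_mul_of_nonneg_right h (sq_nonneg _)
  · simp [hv i h]

theorem inner_sub_eq_ite_of_eq_sum_filter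
    (hP : ∀ v, P v = ∑ i ∈ univ.filter (fun i => lam i ≤ c + a), ⟪u i, v⟫ • u i) (w : H)
    (i : ι) : ⟪u i, w - P w⟫ = if lam i ≤ c + a then 0 else ⟪u i, w⟫ := by
  classical
  rw [inner_sub_right, hP, inner_sum]
  simp_rw [real_inner_smul_right, u.inner_eq_ite, mul_ite, mul_one, mul_zero,
    Finset.sum_ite_eq, Finset.mem_filter, Finset.mem_univ, true_and]
  split_ifs <;> ring

theorem mul_norm_sq_sub_le_of_eq_sum_filter
    (hP : ∀ v, P v = ∑ i ∈ univ.filter (fun i => lam i ≤ c + a), ⟪u i, v⟫ • u i) (w : H) :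
    a * ‖w - P w‖ ^ 2 ≤ ∑ i, max (lam i - c) 0 * ⟪u i, w⟫ ^ 2 := by
  rw [u.norm_sq_eq_sum_inner_sq, Finset.mul_sum]
  refine Finset.sum_le_sum fun i _ => ?_
  rw [inner_sub_eq_ite_of_eq_sum_filter u hP]
  split_ifs with h
  · simp only [ne_eq, OfNat.ofNat_ne_zero, not_false_eq_true, zero_pow, mul_zero]
    positivity
  · exact mul_le_mul_of_nonneg_right (by linarith [le_max_left (lam i - c) 0]) (sq_nonneg _)

theorem mul_apply_sub_le_of_eq_sum_filter (heig : ∀ i v, D (u i) v = lam i * ⟪u i, v⟫)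
    (hc : 0 ≤ c) (ha : 0 < a)
    (hP : ∀ v, P v = ∑ i ∈ univ.filter (fun i => lam i ≤ c + a), ⟪u i, v⟫ • u i) (w : H) :
    a * D (w - P w) (w - P w) ≤ (c + a) * ∑ i, max (lam i - c) 0 * ⟪u i, w⟫ ^ 2 := by
  rw [apply_self_eq_sum_mul_inner_sq u heig, Finset.mul_sum, Finset.mul_sum]
  refine Finset.sum_le_sum fun i _ => ?_
  rw [inner_sub_eq_ite_of_eq_sum_filter u hP]
  split_ifs with h
  · simp only [ne_eq, OfNat.ofNat_ne_zero, not_false_eq_true, zero_pow, mul_zero]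
    positivity
  · rw [max_eq_left (by linarith), ← mul_assoc, ← mul_assoc]
    exact mul_le_mul_of_nonneg_right (by nlinarith) (sq_nonneg _)

variable [FiniteDimensional ℝ H]

theorem Orthonormal.norm_sq_starProjection_span {κ : Type*} [Fintype κ] {e : κ → H}
    (he : Orthonormal ℝ e) (x : H) :
    ‖(span ℝ (Set.range e)).starProjection x‖ ^ 2 = ∑ k, ⟪e k, x⟫ ^ 2 := by
  set K := span ℝ (Set.range e)
  let b := (Module.Basis.span he.linearIndependent).toOrthonormalBasis (by
    rw [show ⇑(Module.Basis.span he.linearIndependent) = _ from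
      funext (Module.Basis.span_apply _)]
    exact orthonormal_span he)
  calc ‖K.starProjection x‖ ^ 2 = ‖K.orthogonalProjectionOnto x‖ ^ 2 := rfl
    _ = ∑ k, ‖⟪b k, K.orthogonalProjectionOnto x⟫‖ ^ 2 := (b.sum_sq_norm_inner_right _).symm
    _ = ∑ k, ⟪e k, x⟫ ^ 2 := by
      refine Finset.sum_congr rfl fun k _ => ?_
      rw [inner_orthogonalProjectionOnto_eq_of_mem_left, Real.norm_eq_abs, sq_abs]
      simp [b, Module.Basis.span_apply]

theorem inner_sq_le_norm_sq_starProjection_mul {K : Submodule ℝ H} {w : H} (hw : w ∈ K) (x : H) :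
    ⟪x, w⟫ ^ 2 ≤ ‖K.starProjection x‖ ^ 2 * ‖w‖ ^ 2 := by
  have h : ⟪x, w⟫ = ⟪K.starProjection x, w⟫ := by
    rw [inner_starProjection_left_eq_right, starProjection_eq_self_iff.mpr hw]
  rw [h, ← mul_pow]
  exact sq_le_sq' (neg_le_of_abs_le (abs_real_inner_le_norm _ _)) (real_inner_le_norm _ _)

theorem sum_apply_self_eq_sum_mul_norm_sq_starProjection
    (heig : ∀ i v, D (u i) v = lam i * ⟪u i, v⟫) {κ : Type*} [Fintype κ] {e : κ → H}
    (he : Orthonormal ℝ e) :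
    ∑ k, D (e k) (e k) = ∑ i, lam i * ‖(span ℝ (Set.range e)).starProjection (u i)‖ ^ 2 := by
  simp_rw [apply_self_eq_sum_mul_inner_sq u heig, he.norm_sq_starProjection_span, Finset.mul_sum]
  rw [Finset.sum_comm]
  simp_rw [real_inner_comm]

theorem sum_norm_sq_starProjection_span_eq_card {κ : Type*} [Fintype κ] {e : κ → H}
    (he : Orthonormal ℝ e) :
    ∑ i, ‖(span ℝ (Set.range e)).starProjection (u i)‖ ^ 2 = Fintype.card κ := by
  have h := sum_apply_self_eq_sum_mul_norm_sq_starProjection u (D := innerₗ H) (lam := 1)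
    (fun i v => by simp) he
  simp only [innerₗ_apply_apply, real_inner_self_eq_norm_sq, he.1, Pi.one_apply, one_mul] at h
  simpa using h.symm

theorem OrthonormalBasis.norm_sq_starProjection_span_image (s : Set ι) [DecidablePred (· ∈ s)]
    (i : ι) : ‖(span ℝ (u '' s)).starProjection (u i)‖ ^ 2 = if i ∈ s then 1 else 0 := by
  split_ifs with hi
  · rw [starProjection_eq_self_iff.mpr (subset_span (Set.mem_image_of_mem u hi)), u.norm_eq_one,
      one_pow]
  · have hle : span ℝ (u '' s) ≤ (ℝ ∙ u i)ᗮ := span_le.mpr <| by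
      rintro _ ⟨j, hj, rfl⟩
      exact mem_orthogonal_singleton_iff_inner_left.mpr
        (u.inner_eq_zero (by rintro rfl; exact hi hj))
    rw [(starProjection_apply_eq_zero_iff _).mpr fun x hx =>
      mem_orthogonal_singleton_iff_inner_left.mp (hle hx), norm_zero]
    norm_num

end Spectral

theorem Submodule.exists_orthonormal_span_eq_pairwise_inner_map_eq_zero
    {E G : Type*} [NormedAddCommGroup E] [InnerProductSpace ℝ E]
    [NormedAddCommGroup G] [InnerProductSpace ℝ G] [FiniteDimensional ℝ G]
    (K : Submodule ℝ E) [FiniteDimensional ℝ K] (A : E →ₗ[ℝ] G) :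
    ∃ b : Fin (Module.finrank ℝ K) → E, Orthonormal ℝ b ∧ span ℝ (Set.range b) = K ∧
      Pairwise fun k m => ⟪A (b k), A (b m)⟫ = 0 := by
  set B := A ∘ₗ K.subtype
  have hT : (B.adjoint ∘ₗ B).IsSymmetric := fun x y => by
    simp only [LinearMap.comp_apply, LinearMap.adjoint_inner_left, LinearMap.adjoint_inner_right]
  set v := hT.eigenvectorBasis rfl
  refine ⟨fun k => v k, v.orthonormal.comp_linearIsometry K.subtypeₗᵢ, ?_, fun k m hkm => ?_⟩
  · rw [show Set.range (fun k => (v k : E)) = K.subtype '' Set.range v from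
      Set.range_comp _ _, Submodule.span_image, ← v.coe_toBasis, v.toBasis.span_eq, map_subtype_top]
  · have h := LinearMap.adjoint_inner_left B (v m) (B (v k))
    rw [← LinearMap.comp_apply, hT.apply_eigenvectorBasis, real_inner_smul_left,
      v.inner_eq_zero hkm, mul_zero] at h
    exact h.symm

theorem Orthonormal.of_pairwise_inner_eq_zero {E ι : Type*} [NormedAddCommGroup E]
    [InnerProductSpace ℝ E] {v : ι → E} (hv : Pairwise fun k m => ⟪v k, v m⟫ = 0)
    (hv0 : ∀ k, v k ≠ 0) : Orthonormal ℝ fun k => ‖v k‖⁻¹ • v k := by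
  refine ⟨fun k => ?_, fun k m hkm => ?_⟩
  · rw [norm_smul, norm_inv, norm_norm, inv_mul_cancel₀ (norm_ne_zero_iff.mpr (hv0 k))]
  · simp only [real_inner_smul_left, real_inner_smul_right, hv hkm, mul_zero]

theorem exists_orthonormal_sum_apply_self_le_add {E G : Type*}
    [NormedAddCommGroup E] [InnerProductSpace ℝ E]
    [NormedAddCommGroup G] [InnerProductSpace ℝ G] [FiniteDimensional ℝ G]
    (K : Submodule ℝ E) [FiniteDimensional ℝ K] (A : E →ₗ[ℝ] G)
    (B₁ : E →ₗ[ℝ] E →ₗ[ℝ] ℝ) (B₂ : G →ₗ[ℝ] G →ₗ[ℝ] ℝ) {c : ℝ}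
    (hinj : ∀ x ∈ K, A x = 0 → x = 0)
    (hc : ∀ x ∈ K, x ≠ 0 → B₂ (A x) (A x) / ‖A x‖ ^ 2 - B₁ x x / ‖x‖ ^ 2 ≤ c) :
    ∃ b : Fin (Module.finrank ℝ K) → E, ∃ e : Fin (Module.finrank ℝ K) → G,
      Orthonormal ℝ b ∧ span ℝ (Set.range b) = K ∧ Orthonormal ℝ e ∧
      (∀ x ∈ K, A x ∈ span ℝ (Set.range e)) ∧
      ∑ k, B₂ (e k) (e k) ≤ ∑ k, B₁ (b k) (b k) + Module.finrank ℝ K * c := by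
  obtain ⟨b, hb, hbK, hAb⟩ := K.exists_orthonormal_span_eq_pairwise_inner_map_eq_zero A
  have hbmem : ∀ k, b k ∈ K := fun k => hbK ▸ subset_span (Set.mem_range_self k)
  have hAb0 : ∀ k, A (b k) ≠ 0 := fun k h => hb.ne_zero k (hinj _ (hbmem k) h)
  set e := fun k => ‖A (b k)‖⁻¹ • A (b k)
  refine ⟨b, e, hb, hbK, Orthonormal.of_pairwise_inner_eq_zero hAb hAb0, fun x hx => ?_, ?_⟩
  · rw [← hbK] at hx
    have hAK : (span ℝ (Set.range b)).map A ≤ span ℝ (Set.range e) := by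
      rw [Submodule.map_span, span_le]
      rintro _ ⟨_, ⟨k, rfl⟩, rfl⟩
      have : A (b k) = ‖A (b k)‖ • e k := by
        simp [e, smul_smul, mul_inv_cancel₀ (norm_ne_zero_iff.mpr (hAb0 k))]
      exact this ▸ smul_mem _ _ (subset_span (Set.mem_range_self k))
    exact hAK (mem_map_of_mem hx)
  · have hk : ∀ k, B₂ (e k) (e k) ≤ B₁ (b k) (b k) + c := fun k => by
      have h := hc _ (hbmem k) (hb.ne_zero k)
      rw [hb.1 k, one_pow, div_one] at h
      have he : B₂ (e k) (e k) = B₂ (A (b k)) (A (b k)) / ‖A (b k)‖ ^ 2 := by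
        simp only [e, map_smul, LinearMap.smul_apply, smul_eq_mul]
        field_simp
      linarith
    calc ∑ k, B₂ (e k) (e k) ≤ ∑ k, (B₁ (b k) (b k) + c) := Finset.sum_le_sum fun k _ => hk k
      _ = _ := by simp [Finset.sum_add_distrib]

theorem eigenvalue_le_eigenvalue_add_of_rayleigh_sub_le
    {H₁ H₂ : Type*} [NormedAddCommGroup H₁] [InnerProductSpace ℝ H₁]
    [NormedAddCommGroup H₂] [InnerProductSpace ℝ H₂] {n₁ n₂ : ℕ}
    {D₁ : H₁ →ₗ[ℝ] H₁ →ₗ[ℝ] ℝ} {D₂ : H₂ →ₗ[ℝ] H₂ →ₗ[ℝ] ℝ}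
    (f : OrthonormalBasis (Fin n₁) ℝ H₁) (u : OrthonormalBasis (Fin n₂) ℝ H₂)
    {lam1 : Fin n₁ → ℝ} {lam2 : Fin n₂ → ℝ} (hmono₁ : Monotone lam1) (hmono₂ : Monotone lam2)
    (heig₁ : ∀ i v, D₁ (f i) v = lam1 i * ⟪f i, v⟫)
    (heig₂ : ∀ i v, D₂ (u i) v = lam2 i * ⟪u i, v⟫)
    (Q : H₂ →ₗ[ℝ] H₁) (V : Submodule ℝ H₂) {E : ℝ} (hinj : ∀ v ∈ V, Q v = 0 → v = 0)
    (hE : ∀ v ∈ V, v ≠ 0 → D₁ (Q v) (Q v) / ‖Q v‖ ^ 2 - D₂ v v / ‖v‖ ^ 2 ≤ E)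
    {j : ℕ} (hj₁ : j < n₁) (hj₂ : j < n₂) (hV : ∀ i : Fin n₂, (i : ℕ) ≤ j → u i ∈ V) :
    lam1 ⟨j, hj₁⟩ ≤ lam2 ⟨j, hj₂⟩ + E := by
  -- a nonzero `v` in the span of `u₀, …, u_j` with `Q v ⊥ f₀, …, f_{j-1}`, by counting dimensions
  set w : Fin (j + 1) → H₂ := fun k => u ⟨k, by omega⟩
  have hw : Orthonormal ℝ w := u.orthonormal.comp _ fun k m h => Fin.ext (Fin.mk.inj h)
  let φ : (Fin (j + 1) → ℝ) →ₗ[ℝ] (Fin j → ℝ) := LinearMap.pi fun i =>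
    innerₗ H₁ (f ⟨i, by omega⟩) ∘ₗ Q ∘ₗ Fintype.linearCombination ℝ w
  obtain ⟨c, hc, hc0⟩ := Submodule.exists_mem_ne_zero_of_ne_bot
    (LinearMap.ker_ne_bot_of_finrank_lt (f := φ) (by simp))
  set v := ∑ k, c k • w k
  have hvV : v ∈ V := sum_mem fun k _ => V.smul_mem _ (hV _ (Nat.lt_succ_iff.mp k.2))
  have hv0 : v ≠ 0 := fun h => hc0 (funext fun k => by
    rw [← hw.inner_right_fintype c k, show ∑ k, c k • w k = 0 from h, inner_zero_right,
      Pi.zero_apply])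
  have hQv0 : Q v ≠ 0 := fun h => hv0 (hinj v hvV h)
  have hQv : ∀ i : Fin n₁, lam1 i < lam1 ⟨j, hj₁⟩ → ⟪f i, Q v⟫ = 0 := fun i hi => by
    have hij : (i : ℕ) < j := by
      by_contra h
      exact (hmono₁ (Fin.mk_le_of_le_val (not_lt.mp h))).not_gt hi
    simpa [φ, v, Fintype.linearCombination_apply, inner_sum, real_inner_smul_right] using
      congrFun (LinearMap.mem_ker.mp hc) ⟨i, hij⟩
  have hv : ∀ i : Fin n₂, lam2 ⟨j, hj₂⟩ < lam2 i → ⟪u i, v⟫ = 0 := fun i hi => by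
    have hij : j < (i : ℕ) := by
      by_contra h
      exact (hmono₂ (Fin.le_def.mpr (not_lt.mp h))).not_gt hi
    refine (inner_sum _ _ _).trans (Finset.sum_eq_zero fun k _ => ?_)
    rw [real_inner_smul_right, u.inner_eq_zero (fun h => by simp [Fin.ext_iff] at h; omega),
      mul_zero]
  have h₁ : lam1 ⟨j, hj₁⟩ ≤ D₁ (Q v) (Q v) / ‖Q v‖ ^ 2 :=
    (le_div_iff₀ (by positivity)).mpr (mul_norm_sq_le_apply_self f heig₁ hQv)
  have h₂ : D₂ v v / ‖v‖ ^ 2 ≤ lam2 ⟨j, hj₂⟩ :=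
    (div_le_iff₀ (by positivity)).mpr (apply_self_le_mul_norm_sq u heig₂ hv)
  linarith [hE v hvV hv0]

theorem Fin.sum_filter_val_lt {M : Type*} [AddCommMonoid M] {n l : ℕ} (h : l ≤ n)
    (g : Fin n → M) :
    ∑ i ∈ univ.filter (fun i : Fin n => (i : ℕ) < l), g i = ∑ k : Fin l, g (Fin.castLE h k) := by
  have hS : univ.filter (fun i : Fin n => (i : ℕ) < l) = univ.map (Fin.castLEEmb h) := by
    ext i
    simp only [Finset.mem_filter, Finset.mem_univ, true_and, Finset.mem_map, Fin.castLEEmb_apply]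
    exact ⟨fun hi => ⟨⟨i, hi⟩, rfl⟩, fun ⟨k, hk⟩ => hk ▸ k.2⟩
  rw [hS, Finset.sum_map]
  rfl

theorem Finset.sum_le_sum_mul_of_sum_eq_card {ι : Type*} [Fintype ι] (S : Finset ι)
    {ν t : ι → ℝ} {M : ℝ} (hν : ∀ i ∈ S, ν i ≤ M) (hνM : ∀ i ∉ S, ν i = M)
    (ht : ∀ i ∈ S, t i ≤ 1) (hsum : ∑ i, t i = S.card) :
    ∑ i ∈ S, ν i ≤ ∑ i, ν i * t i := by
  classical
  have hsplit : ∑ i, ν i * t i = ∑ i ∈ S, ν i * t i + M * ∑ i ∈ Sᶜ, t i := by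
    rw [← Finset.sum_add_sum_compl S, Finset.mul_sum]
    congr 1
    exact Finset.sum_congr rfl fun i hi => by rw [hνM i (Finset.mem_compl.mp hi)]
  have hcompl : ∑ i ∈ Sᶜ, t i = ∑ i ∈ S, (1 - t i) := by
    rw [Finset.sum_sub_distrib, Finset.sum_const, nsmul_one, ← hsum,
      ← Finset.sum_add_sum_compl S t]
    ring
  rw [hsplit, hcompl, Finset.mul_sum, ← Finset.sum_add_distrib]
  exact Finset.sum_le_sum fun i hi => by nlinarith [hν i hi, ht i hi]

theorem sum_castLE_le_sum_min_mul_add {n₁ n₂ l : ℕ} (hl : 0 < l) (hln₁ : l ≤ n₁)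
    (hln₂ : l ≤ n₂) {lam1 : Fin n₁ → ℝ} {lam2 : Fin n₂ → ℝ} (hmono₁ : Monotone lam1)
    (hmono₂ : Monotone lam2) {E : ℝ} (hE : 0 ≤ E)
    (hcmp : ∀ k : Fin l, lam1 (Fin.castLE hln₁ k) ≤ lam2 (Fin.castLE hln₂ k) + E)
    {t : Fin n₂ → ℝ} (ht0 : ∀ i, 0 ≤ t i) (ht1 : ∀ i, t i ≤ 1) (hsum : ∑ i, t i = l) :
    ∑ k : Fin l, lam1 (Fin.castLE hln₁ k) ≤
      ∑ i, min (lam2 i) (lam1 ⟨l - 1, by omega⟩) * t i + l * E := by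
  set M := lam1 ⟨l - 1, by omega⟩
  set S := univ.filter fun i : Fin n₂ => (i : ℕ) < l
  have hS : S.card = l := by rw [Fin.card_filter_val_lt, min_eq_right hln₂]
  -- `min (lam2 i + E) M` attains its maximum `M` for `i ≥ l`, so weights in `[0, 1]` of total
  -- mass `l` give at least its sum over `i < l`
  have hbathtub : ∑ i ∈ S, min (lam2 i + E) M ≤ ∑ i, min (lam2 i + E) M * t i := by
    refine S.sum_le_sum_mul_of_sum_eq_card (fun i _ => min_le_right _ _) (fun i hi => ?_)
      (fun i _ => ht1 i) (by rw [hsum, hS])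
    have hi : l - 1 ≤ (i : ℕ) := by simp [S] at hi; omega
    refine min_eq_right ((hcmp ⟨l - 1, by omega⟩).trans ?_)
    exact add_le_add_left (hmono₂ (show Fin.castLE hln₂ ⟨l - 1, by omega⟩ ≤ i from hi)) E
  calc ∑ k : Fin l, lam1 (Fin.castLE hln₁ k)
      ≤ ∑ i ∈ S, min (lam2 i + E) M := by
        rw [Fin.sum_filter_val_lt hln₂]
        exact Finset.sum_le_sum fun k _ =>
          le_min (hcmp k) (hmono₁ (Fin.le_def.mpr (by simp; omega)))
    _ ≤ ∑ i, min (lam2 i + E) M * t i := hbathtub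
    _ ≤ ∑ i, (min (lam2 i) M + E) * t i :=
        Finset.sum_le_sum fun i _ => mul_le_mul_of_nonneg_right (by
          rw [← min_add_add_right]
          exact min_le_min_left _ (le_add_of_nonneg_right hE)) (ht0 i)
    _ = ∑ i, min (lam2 i) M * t i + l * E := by
        simp_rw [add_mul, Finset.sum_add_distrib, ← Finset.mul_sum, hsum, mul_comm E]

theorem card_eq_and_sum_apply_self_eq_of_span_range_eq {H : Type*} [NormedAddCommGroup H]
    [InnerProductSpace ℝ H] [FiniteDimensional ℝ H] {n l m : ℕ} {D : H →ₗ[ℝ] H →ₗ[ℝ] ℝ}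
    (f : OrthonormalBasis (Fin n) ℝ H) {lam : Fin n → ℝ}
    (heig : ∀ i v, D (f i) v = lam i * ⟪f i, v⟫) (hln : l ≤ n) {b : Fin m → H}
    (hb : Orthonormal ℝ b) (hbF : span ℝ (Set.range b) = span ℝ (f '' {i : Fin n | (i : ℕ) < l})) :
    m = l ∧ ∑ k, D (b k) (b k) = ∑ k : Fin l, lam (Fin.castLE hln k) := by
  have hbf : ∀ i, ‖(span ℝ (Set.range b)).starProjection (f i)‖ ^ 2 =
      if (i : ℕ) < l then 1 else 0 := fun i => by
    rw [hbF]
    exact f.norm_sq_starProjection_span_image _ i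
  constructor
  · have h := sum_norm_sq_starProjection_span_eq_card f hb
    simp_rw [hbf, Finset.sum_boole, Fin.card_filter_val_lt, min_eq_right hln,
      Fintype.card_fin] at h
    exact_mod_cast h.symm
  · rw [sum_apply_self_eq_sum_mul_norm_sq_starProjection f heig hb, ← Fin.sum_filter_val_lt hln,
      Finset.sum_filter]
    simp_rw [hbf, mul_ite, mul_one, mul_zero]

theorem sum_max_sub_mul_inner_sq_le {H₁ H₂ : Type*}
    [NormedAddCommGroup H₁] [InnerProductSpace ℝ H₁] [FiniteDimensional ℝ H₁]
    [NormedAddCommGroup H₂] [InnerProductSpace ℝ H₂] [FiniteDimensional ℝ H₂] {n₁ n₂ : ℕ}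
    {D₁ : H₁ →ₗ[ℝ] H₁ →ₗ[ℝ] ℝ} {D₂ : H₂ →ₗ[ℝ] H₂ →ₗ[ℝ] ℝ}
    (f : OrthonormalBasis (Fin n₁) ℝ H₁) (u : OrthonormalBasis (Fin n₂) ℝ H₂)
    {lam1 : Fin n₁ → ℝ} {lam2 : Fin n₂ → ℝ} (hmono₁ : Monotone lam1) (hmono₂ : Monotone lam2)
    (heig₁ : ∀ i v, D₁ (f i) v = lam1 i * ⟪f i, v⟫)
    (heig₂ : ∀ i v, D₂ (u i) v = lam2 i * ⟪u i, v⟫)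
    {l : ℕ} (hl : 0 < l) (hln₁ : l ≤ n₁) (hln₂ : l ≤ n₂)
    (Q₁ : H₁ →ₗ[ℝ] H₂) (Q₂ : H₂ →ₗ[ℝ] H₁) {E₁ E₂ : ℝ}
    (hinj₁ : ∀ g ∈ span ℝ (f '' {i : Fin n₁ | (i : ℕ) < l}), Q₁ g = 0 → g = 0)
    (hinj₂ : ∀ v ∈ span ℝ (u '' {i : Fin n₂ | (i : ℕ) < l}), Q₂ v = 0 → v = 0)
    (hE₁ : ∀ v ∈ span ℝ (u '' {i : Fin n₂ | (i : ℕ) < l}), v ≠ 0 →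
      D₁ (Q₂ v) (Q₂ v) / ‖Q₂ v‖ ^ 2 - D₂ v v / ‖v‖ ^ 2 ≤ E₁)
    (hE₂ : ∀ g ∈ span ℝ (f '' {i : Fin n₁ | (i : ℕ) < l}), g ≠ 0 →
      D₂ (Q₁ g) (Q₁ g) / ‖Q₁ g‖ ^ 2 - D₁ g g / ‖g‖ ^ 2 ≤ E₂)
    {g : H₁} (hg : g ∈ span ℝ (f '' {i : Fin n₁ | (i : ℕ) < l})) :
    ∑ i, max (lam2 i - lam1 ⟨l - 1, by omega⟩) 0 * ⟪u i, Q₁ g⟫ ^ 2 ≤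
      l * (max E₁ 0 + E₂) * ‖Q₁ g‖ ^ 2 := by
  set F := span ℝ (f '' {i : Fin n₁ | (i : ℕ) < l})
  set M := lam1 ⟨l - 1, by omega⟩
  obtain ⟨b, e, hb, hbF, he, hQe, htrace⟩ :=
    exists_orthonormal_sum_apply_self_le_add F Q₁ D₁ D₂ hinj₁ hE₂
  set t := fun i => ‖(span ℝ (Set.range e)).starProjection (u i)‖ ^ 2
  obtain ⟨hm, htrace₁⟩ := card_eq_and_sum_apply_self_eq_of_span_range_eq f heig₁ hln₁ hb hbF
  have hupper : ∑ i, lam2 i * t i ≤ ∑ k : Fin l, lam1 (Fin.castLE hln₁ k) + l * E₂ := by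
    rw [← sum_apply_self_eq_sum_mul_norm_sq_starProjection u heig₂ he, ← htrace₁, ← hm]
    exact htrace
  have hcmp : ∀ k : Fin l, lam1 (Fin.castLE hln₁ k) ≤ lam2 (Fin.castLE hln₂ k) + max E₁ 0 :=
    fun k => (eigenvalue_le_eigenvalue_add_of_rayleigh_sub_le f u hmono₁ hmono₂ heig₁ heig₂ Q₂ _
      hinj₂ hE₁ (k.2.trans_le hln₁) (k.2.trans_le hln₂)
      fun i hi => subset_span ⟨i, lt_of_le_of_lt hi k.2, rfl⟩).trans
      (add_le_add_right (le_max_left _ _) _)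
  have hlower : ∑ k : Fin l, lam1 (Fin.castLE hln₁ k) ≤ ∑ i, min (lam2 i) M * t i + l * max E₁ 0 :=
    sum_castLE_le_sum_min_mul_add hl hln₁ hln₂ hmono₁ hmono₂ (le_max_right _ _) hcmp
      (fun i => sq_nonneg _)
      (fun i => pow_le_one₀ (norm_nonneg _)
        ((norm_starProjection_apply_le _ _).trans (u.norm_eq_one i).le))
      (by rw [sum_norm_sq_starProjection_span_eq_card u he, Fintype.card_fin, hm])
  calc ∑ i, max (lam2 i - M) 0 * ⟪u i, Q₁ g⟫ ^ 2
      ≤ ∑ i, max (lam2 i - M) 0 * (t i * ‖Q₁ g‖ ^ 2) := Finset.sum_le_sum fun i _ =>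
        mul_le_mul_of_nonneg_left (inner_sq_le_norm_sq_starProjection_mul (hQe g hg) (u i))
          (le_max_right _ _)
    _ = (∑ i, lam2 i * t i - ∑ i, min (lam2 i) M * t i) * ‖Q₁ g‖ ^ 2 := by
        rw [← Finset.sum_sub_distrib, Finset.sum_mul]
        refine Finset.sum_congr rfl fun i _ => ?_
        rcases le_total (lam2 i) M with h | h
        · rw [max_eq_right (sub_nonpos.mpr h), min_eq_left h]
          ring
        · rw [max_eq_left (sub_nonneg.mpr h), min_eq_right h]
          ring
    _ ≤ l * (max E₁ 0 + E₂) * ‖Q₁ g‖ ^ 2 :=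
        mul_le_mul_of_nonneg_right (by linarith) (sq_nonneg _)

/-- **Projection estimate for transplanted eigenvectors.**
In the setting of the two-sided eigenvalue comparison (forms `D₁, D₂ ≥ 0` with orthonormal
eigenbases `f`, `u` and nondecreasing eigenvalues `lam1`, `lam2`, maps `Q₁`, `Q₂`, defect
bounds `E₁`, `E₂` on the spans of the first `l` eigenvectors), fix `a > 0` and let `P` be
the orthogonal projection onto the span of eigenvectors of `D₂` with eigenvalue
`≤ λ_l(D₁) + a`.  Then for every `g` in the span of the first `l` eigenvectors of `D₁`:
`‖(1−P)Q₁g‖² ≤ (l/a)((E₁)₊ + E₂)‖Q₁g‖²` and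
`D₂((1−P)Q₁g, (1−P)Q₁g) ≤ ((λ_l(D₁)+a)/a)·l·((E₁)₊ + E₂)·‖Q₁g‖²`. -/
theorem stmt8 {H₁ H₂ : Type*}
    [NormedAddCommGroup H₁] [InnerProductSpace ℝ H₁] [FiniteDimensional ℝ H₁]
    [NormedAddCommGroup H₂] [InnerProductSpace ℝ H₂] [FiniteDimensional ℝ H₂]
    (n₁ n₂ : ℕ)
    (D₁ : H₁ →ₗ[ℝ] H₁ →ₗ[ℝ] ℝ) (D₂ : H₂ →ₗ[ℝ] H₂ →ₗ[ℝ] ℝ)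
    (hpsd₁ : ∀ u, 0 ≤ D₁ u u)
    (f : OrthonormalBasis (Fin n₁) ℝ H₁) (u : OrthonormalBasis (Fin n₂) ℝ H₂)
    (lam1 : Fin n₁ → ℝ) (lam2 : Fin n₂ → ℝ) (hmono₁ : Monotone lam1) (hmono₂ : Monotone lam2)
    (heig₁ : ∀ i v, D₁ (f i) v = lam1 i * (inner ℝ (f i) v : ℝ))
    (heig₂ : ∀ i v, D₂ (u i) v = lam2 i * (inner ℝ (u i) v : ℝ))
    (l : ℕ) (hl1 : 1 ≤ l) (hln₁ : l ≤ n₁) (hln₂ : l ≤ n₂)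
    (Q₁ : H₁ →ₗ[ℝ] H₂) (Q₂ : H₂ →ₗ[ℝ] H₁) (E₁ E₂ : ℝ)
    (hinj₁ : ∀ g ∈ Submodule.span ℝ ((fun i => f i) '' {i : Fin n₁ | (i : ℕ) < l}),
      Q₁ g = 0 → g = 0)
    (hinj₂ : ∀ v ∈ Submodule.span ℝ ((fun i => u i) '' {i : Fin n₂ | (i : ℕ) < l}),
      Q₂ v = 0 → v = 0)
    (hE₁ : ∀ v ∈ Submodule.span ℝ ((fun i => u i) '' {i : Fin n₂ | (i : ℕ) < l}), v ≠ 0 →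
      D₁ (Q₂ v) (Q₂ v) / ‖Q₂ v‖ ^ 2 - D₂ v v / ‖v‖ ^ 2 ≤ E₁)
    (hE₂ : ∀ g ∈ Submodule.span ℝ ((fun i => f i) '' {i : Fin n₁ | (i : ℕ) < l}), g ≠ 0 →
      D₂ (Q₁ g) (Q₁ g) / ‖Q₁ g‖ ^ 2 - D₁ g g / ‖g‖ ^ 2 ≤ E₂)
    (a : ℝ) (ha : 0 < a) (P : H₂ → H₂)
    (hP : ∀ v, P v = ∑ i ∈ Finset.univ.filter
        (fun i => lam2 i ≤ lam1 ⟨l - 1, by omega⟩ + a),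
      (inner ℝ (u i) v : ℝ) • u i) :
    ∀ g ∈ Submodule.span ℝ ((fun i => f i) '' {i : Fin n₁ | (i : ℕ) < l}),
      ‖Q₁ g - P (Q₁ g)‖ ^ 2 ≤ (l : ℝ) / a * (max E₁ 0 + E₂) * ‖Q₁ g‖ ^ 2 ∧
      D₂ (Q₁ g - P (Q₁ g)) (Q₁ g - P (Q₁ g)) ≤
        (lam1 ⟨l - 1, by omega⟩ + a) / a * l * (max E₁ 0 + E₂) * ‖Q₁ g‖ ^ 2 := by
  intro g hg
  set M := lam1 ⟨l - 1, by omega⟩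
  have hM : 0 ≤ M := by simpa [heig₁, f.inner_eq_one] using hpsd₁ (f ⟨l - 1, by omega⟩)
  have hexcess := sum_max_sub_mul_inner_sq_le f u hmono₁ hmono₂ heig₁ heig₂ hl1 hln₁ hln₂ Q₁ Q₂
    hinj₁ hinj₂ hE₁ hE₂ hg
  have hnorm := mul_norm_sq_sub_le_of_eq_sum_filter u hP (Q₁ g)
  have happly := mul_apply_sub_le_of_eq_sum_filter u heig₂ hM ha hP (Q₁ g)
  constructor
  · rw [show (l : ℝ) / a * (max E₁ 0 + E₂) * ‖Q₁ g‖ ^ 2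
      = l * (max E₁ 0 + E₂) * ‖Q₁ g‖ ^ 2 / a by ring, le_div_iff₀' ha]
    linarith
  · rw [show (M + a) / a * l * (max E₁ 0 + E₂) * ‖Q₁ g‖ ^ 2
      = (M + a) * (l * (max E₁ 0 + E₂) * ‖Q₁ g‖ ^ 2) / a by ring, le_div_iff₀' ha]
    exact happly.trans (mul_le_mul_of_nonneg_left hexcess (by linarith))
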